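/- arXiv:math/0404511 — 3 statements merged into one kernel-verified Lean document; each statement's English description precedes it below -/
import Mathlib

section
/- Let dz_ℓ : ℝ → ℝ be any function satisfying dz_ℓ(x) = 0 for |x| ≤ ℓ and dz_ℓ(x) = x for |x| ≥ ℓ+1, and additionally x·dz_ℓ(x) ≥ 0 for all x. Define dzv_ℓ : ℝ^q → ℝ^q componentwise. If θ ∈ ℝ^q satisfies |θ| < ℓ (Euclidean norm, hence each |θ_i| < ℓ), then for every θ̃ ∈ ℝ^q one has θ̃ᵀ · dzv_ℓ(θ̃ + θ) ≥ 0. -/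
lemma coord_abs_le_norm (q : ℕ) (θ : EuclideanSpace ℝ (Fin q)) (i : Fin q) :
    |θ i| ≤ ‖θ‖ := by
  rw [EuclideanSpace.norm_eq]
  have h : |θ i| = Real.sqrt (‖θ i‖ ^ 2) := by
    rw [Real.sqrt_sq_eq_abs]; simp
  rw [h]
  apply Real.sqrt_le_sqrt
  exact Finset.single_le_sum (fun j _ => sq_nonneg ‖θ j‖) (Finset.mem_univ i)

/-- the dead-zone nonlinearity satisfies
`θ̃ᵀ dzv_ℓ(θ̃ + θ) ≥ 0` whenever `|θ| < ℓ`. -/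
theorem deadzone_nonneg (q : ℕ) (ℓ : ℝ) (hℓ : 0 < ℓ)
    (dz : ℝ → ℝ)
    (hdz0 : ∀ x : ℝ, |x| ≤ ℓ → dz x = 0)
    (hdz1 : ∀ x : ℝ, ℓ + 1 ≤ |x| → dz x = x)
    (hdzsign : ∀ x : ℝ, 0 ≤ x * dz x)
    (θ : EuclideanSpace ℝ (Fin q)) (hθ : ‖θ‖ < ℓ)
    (θt : EuclideanSpace ℝ (Fin q)) :
    0 ≤ ∑ i : Fin q, θt i * dz (θt i + θ i) := by
  apply Finset.sum_nonneg
  intro i _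
  set x := θt i + θ i with hx
  have hθi : |θ i| < ℓ := lt_of_le_of_lt (coord_abs_le_norm q θ i) hθ
  by_cases h : dz x = 0
  · rw [h]; simp
  · have hgt : ℓ < |x| := by
      by_contra hle
      exact h (hdz0 x (le_of_not_gt hle))
    have habs := abs_lt.mp hθi
    rcases lt_abs.mp hgt with hpos | hneg
    · -- x > ℓ > 0, so θt i = x - θ i > 0 and dz x ≥ 0
      have hxpos : 0 < x := lt_trans hℓ hpos
      have hθt : 0 < θt i := by
        have : θ i < ℓ := habs.2
        nlinarith
      have hdz : 0 ≤ dz x := nonneg_of_mul_nonneg_right (by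
        have := hdzsign x; linarith [hdzsign x]) hxpos
      positivity
    · have hxneg : x < 0 := by linarith
      have hθt : θt i < 0 := by
        have : -ℓ < θ i := habs.1
        nlinarith
      have hdz : dz x ≤ 0 := by
        nlinarith [hdzsign x]
      nlinarith
end

section
/- Let dz_ℓ : ℝ → ℝ satisfy dz_ℓ(x)=0 for |x| ≤ ℓ, dz_ℓ(x)=x for |x| ≥ ℓ+1, and x·dz_ℓ(x) ≥ 0 everywhere, with dzv_ℓ its componentwise extension to ℝ^q. Fix θ ∈ ℝ^q with each |θ_i| ≤ ℓ. Then for every δ > √q·(2ℓ+1) there exists c₁ > 0 such that for all θ̃ ∈ ℝ^q with |θ̃| ≥ δ, one has 2·θ̃ᵀ·dzv_ℓ(θ̃ + θ) ≥ c₁·|θ̃|². -/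
/-- quadratic lower bound for the dead-zone term far from the origin:
for every `δ > √q (2ℓ+1)` there is `c₁ > 0` with
`2 θ̃ᵀ dzv_ℓ(θ̃+θ) ≥ c₁ |θ̃|²` whenever `|θ̃| ≥ δ`. -/
theorem deadzone_quadratic_lower_bound (q : ℕ) (ℓ : ℝ) (hℓ : 0 < ℓ)
    (dz : ℝ → ℝ)
    (hdz0 : ∀ x : ℝ, |x| ≤ ℓ → dz x = 0)
    (hdz1 : ∀ x : ℝ, ℓ + 1 ≤ |x| → dz x = x)
    (hdzsign : ∀ x : ℝ, 0 ≤ x * dz x)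
    (θ : EuclideanSpace ℝ (Fin q)) (hθ : ∀ i : Fin q, |θ i| ≤ ℓ) :
    ∀ δ : ℝ, Real.sqrt q * (2 * ℓ + 1) < δ →
      ∃ c₁ > 0, ∀ θt : EuclideanSpace ℝ (Fin q), δ ≤ ‖θt‖ →
        c₁ * ‖θt‖ ^ 2 ≤ 2 * ∑ i : Fin q, θt i * dz (θt i + θ i) := by
  intro δ hδ
  have hδpos : 0 < δ := lt_of_le_of_lt (by positivity) hδ
  -- deal with q = 0 : hypothesis δ ≤ ‖θt‖ = 0 is impossible
  rcases Nat.eq_zero_or_pos q with hq | hq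
  · refine ⟨1, one_pos, fun θt hθt => ?_⟩
    exfalso
    have : ‖θt‖ = 0 := by
      subst hq
      simp [EuclideanSpace.norm_eq]
    linarith
  have hqR : (0:ℝ) < q := by exact_mod_cast hq
  refine ⟨1 / q, by positivity, fun θt hθt => ?_⟩
  -- each term is nonnegative
  have hterm : ∀ j : Fin q, 0 ≤ θt j * dz (θt j + θ j) := by
    intro j
    rcases le_or_gt (|θt j + θ j|) ℓ with h | h
    · rw [hdz0 _ h]; ring_nf; simp
    · rcases le_or_gt 0 (θt j + θ j) with hs | hs
      · have hpos : ℓ < θt j + θ j := by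
          rwa [abs_of_nonneg hs] at h
        have h1 : 0 ≤ θt j := by
          have := (abs_le.mp (hθ j)).2
          linarith
        have h2 : 0 ≤ dz (θt j + θ j) := by
          have := hdzsign (θt j + θ j)
          by_contra hc
          push_neg at hc
          nlinarith
        exact mul_nonneg h1 h2
      · have hneg : θt j + θ j < -ℓ := by
          rw [abs_of_neg hs] at h; linarith
        have h1 : θt j ≤ 0 := by
          have := (abs_le.mp (hθ j)).1
          linarith
        have h2 : dz (θt j + θ j) ≤ 0 := by
          have := hdzsign (θt j + θ j)
          by_contra hc
          push_neg at hc
          nlinarith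
        nlinarith [mul_nonneg (neg_nonneg.mpr h1) (neg_nonneg.mpr h2)]
  -- pick a coordinate of maximal absolute value
  obtain ⟨i, -, hi⟩ := Finset.exists_max_image (Finset.univ : Finset (Fin q))
    (fun j => |θt j|) ⟨⟨0, hq⟩, Finset.mem_univ _⟩
  have hnormsq : ‖θt‖ ^ 2 = ∑ j : Fin q, (θt j) ^ 2 := by
    rw [EuclideanSpace.norm_eq]
    rw [Real.sq_sqrt (by positivity)]
    congr 1; ext j; rw [Real.norm_eq_abs, sq_abs]
  have hsumle : ‖θt‖ ^ 2 ≤ q * (θt i) ^ 2 := by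
    rw [hnormsq]
    calc ∑ j : Fin q, (θt j) ^ 2 ≤ ∑ _j : Fin q, (θt i) ^ 2 := by
          apply Finset.sum_le_sum
          intro j _
          rw [← sq_abs (θt j), ← sq_abs (θt i)]
          exact pow_le_pow_left₀ (abs_nonneg _) (hi j (Finset.mem_univ j)) 2
      _ = q * (θt i) ^ 2 := by rw [Finset.sum_const, Finset.card_univ,
          Fintype.card_fin, nsmul_eq_mul]
  -- |θt i| > 2ℓ + 1
  have hbig : 2 * ℓ + 1 < |θt i| := by
    have hs := Real.sq_sqrt (le_of_lt hqR)
    have h1 : (q:ℝ) * (2*ℓ+1)^2 < δ^2 := by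
      have h0 : (0:ℝ) ≤ Real.sqrt q * (2*ℓ+1) := by positivity
      have := mul_self_lt_mul_self h0 hδ
      nlinarith
    have h2 : δ^2 ≤ ‖θt‖^2 := by nlinarith
    have h3 : (2*ℓ+1)^2 < (θt i)^2 := by nlinarith
    nlinarith [sq_abs (θt i), abs_nonneg (θt i)]
  -- the i-th term is large
  have hdzi : dz (θt i + θ i) = θt i + θ i := by
    apply hdz1
    have h1 := abs_sub_abs_le_abs_sub (θt i) (-(θ i))
    have h2 := hθ i
    rw [abs_neg, sub_neg_eq_add] at h1
    linarith
  have htermi : (θt i) ^ 2 / 2 ≤ θt i * dz (θt i + θ i) := by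
    rw [hdzi]
    have h2 := hθ i
    have h3 : θt i * θ i ≥ -(|θt i| * ℓ) := by
      have := abs_mul (θt i) (θ i)
      have h4 := neg_abs_le (θt i * θ i)
      have h5 : |θt i * θ i| ≤ |θt i| * ℓ := by
        rw [abs_mul]
        exact mul_le_mul_of_nonneg_left h2 (abs_nonneg _)
      linarith
    have h6 : |θt i| * ℓ ≤ (θt i)^2 / 2 := by
      nlinarith [sq_abs (θt i), abs_nonneg (θt i)]
    nlinarith [sq_abs (θt i)]
  have hsum : (θt i) ^ 2 / 2 ≤ ∑ j : Fin q, θt j * dz (θt j + θ j) :=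
    le_trans htermi (Finset.single_le_sum (fun j _ => hterm j) (Finset.mem_univ i))
  have : 1 / (q:ℝ) * ‖θt‖ ^ 2 ≤ (θt i) ^ 2 := by
    rw [div_mul_eq_mul_div, one_mul, div_le_iff₀ hqR]
    nlinarith
  linarith
end

section
/- Under the setup of the previous statement (𝒜₀ compact invariant for ż = f(z), F Hurwitz, σ(z) = ∫_{-∞}^0 e^{-Fs}GΩ(τ₁(φ(s,z)))ds), the solution X(t) of Ẋ = FX + GΩ(τ₁(φ(t,z₀))) with initial condition X(0)=X₀ satisfies X(t) = e^{Ft}[X₀ - σ(z₀)] + σ(φ(t,z₀)) for all t ∈ ℝ. In particular, X(t) is bounded for t ≤ 0 if and only if X₀ = σ(z₀). -/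
open MeasureTheory Matrix

/-- Hurwitz matrix: all complex eigenvalues have negative real part. -/
def IsHurwitz {m : ℕ} (A : Matrix (Fin m) (Fin m) ℝ) : Prop :=
  ∀ μ ∈ spectrum ℂ (A.map (algebraMap ℝ ℂ)), μ.re < 0

/-!
Every eigenvalue of `exp F` is `exp μ` for an eigenvalue `μ` of `F` (take an eigenvector of `F`
inside an eigenspace of `exp F`), so for Hurwitz `F` the spectral radius of `exp F` is `< 1` and
Gelfand's formula gives `‖exp (k • F)‖ < 1` for some `k`; hence `exp (t • F)` decays exponentially
as `t → ∞`. This makes the integral defining `σ` converge, and after the substitution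
`s ↦ s + t` the flow property gives
`σ (φ t z₀) = exp (t • F) (σ z₀ + ∫₀ᵗ exp (-s • F) G w (φ s z₀) ds)`. Subtracting this from the
variation-of-constants formula for `X` gives the solution formula. Since `σ` is bounded on the
compact invariant set, `X` is bounded on `t ≤ 0` iff `exp (t • F) (X₀ - σ z₀)` is, and by the
decay of `exp (-t • F)` this forces `X₀ = σ z₀`.
-/

open NormedSpace Filter Topology Set

section BanachAlgebra

theorem exists_norm_pow_lt_one_of_spectralRadius_lt_one {A : Type*} [NormedRing A]
    [NormedAlgebra ℂ A] [CompleteSpace A] {b : A} (hb : spectralRadius ℂ b < 1) :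
    ∃ k : ℕ, 0 < k ∧ ‖b ^ k‖ < 1 := by
  obtain ⟨N, hN⟩ := eventually_atTop.mp
    ((spectrum.pow_norm_pow_one_div_tendsto_nhds_spectralRadius b).eventually (gt_mem_nhds hb))
  refine ⟨N + 1, N.succ_pos, ?_⟩
  have h := ENNReal.ofReal_lt_one.mp (hN (N + 1) N.le_succ)
  contrapose! h
  exact Real.one_le_rpow h (by positivity)

variable {𝔸 : Type*} [NormedRing 𝔸]

theorem norm_pow_mul_le (x y : 𝔸) (k : ℕ) : ‖x ^ k * y‖ ≤ ‖x‖ ^ k * ‖y‖ := by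
  induction k with
  | zero => simp
  | succ k ih =>
    rw [pow_succ', mul_assoc, pow_succ', mul_assoc]
    exact (norm_mul_le _ _).trans (mul_le_mul_of_nonneg_left ih (norm_nonneg x))

/-- Writing `t = k T + s` with `0 ≤ s < T` gives `exp (t • a) = exp (T • a) ^ k * exp (s • a)`. -/
theorem exists_norm_exp_smul_le_of_norm_exp_smul_lt_one [NormedAlgebra ℝ 𝔸] [CompleteSpace 𝔸]
    {a : 𝔸} {T : ℝ} (hT : 0 < T) (ha : ‖exp (T • a)‖ < 1) :
    ∃ C lam : ℝ, 0 ≤ C ∧ 0 < lam ∧ ∀ t, 0 ≤ t → ‖exp (t • a)‖ ≤ C * Real.exp (-lam * t) := by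
  let +nondep : NormedAlgebra ℚ 𝔸 := .restrictScalars ℚ ℝ 𝔸
  set r := max ‖exp (T • a)‖ (1 / 2)
  have hr0 : 0 < r := lt_max_of_lt_right (by norm_num)
  have hr1 : r < 1 := max_lt ha (by norm_num)
  obtain ⟨K, hK⟩ := (isCompact_Icc (a := (0 : ℝ)) (b := T)).exists_bound_of_continuousOn
    (f := fun s : ℝ => exp (s • a)) (by fun_prop)
  have hK0 : 0 ≤ K := (norm_nonneg _).trans (hK 0 ⟨le_rfl, hT.le⟩)
  refine ⟨K / r, -Real.log r / T, by positivity,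
    div_pos (neg_pos.mpr (Real.log_neg hr0 hr1)) hT, fun t ht => ?_⟩
  set k := ⌊t / T⌋₊
  have hkT : k * T ≤ t := (le_div_iff₀ hT).mp (Nat.floor_le (by positivity))
  have hk : t < (k + 1) * T := (div_lt_iff₀ hT).mp (Nat.lt_floor_add_one (t / T))
  have hdecomp : exp (t • a) = exp (T • a) ^ k * exp ((t - k * T) • a) := by
    rw [← NormedSpace.exp_nsmul, ← NormedSpace.exp_add_of_commute
      ((((Commute.refl a).smul_left T).smul_left k).smul_right _), ← Nat.cast_smul_eq_nsmul ℝ,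
      smul_smul, ← add_smul]
    ring_nf
  have hrk : r ^ k ≤ Real.exp (-(-Real.log r / T) * t) / r := by
    rw [le_div_iff₀ hr0, ← pow_succ, ← Real.exp_log hr0, ← Real.exp_nat_mul, Real.log_exp,
      Real.exp_le_exp, show -(-Real.log r / T) * t = t / T * Real.log r by ring]
    push_cast
    exact mul_le_mul_of_nonpos_right ((div_lt_iff₀ hT).mpr hk).le (Real.log_neg hr0 hr1).le
  calc ‖exp (t • a)‖ ≤ r ^ k * K := by
        rw [hdecomp]
        exact (norm_pow_mul_le _ _ k).trans (mul_le_mul (pow_le_pow_left₀ (norm_nonneg _)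
          (le_max_left _ _) k) (hK _ ⟨by linarith, by linarith⟩) (norm_nonneg _) (by positivity))
    _ ≤ Real.exp (-(-Real.log r / T) * t) / r * K := mul_le_mul_of_nonneg_right hrk hK0
    _ = K / r * Real.exp (-(-Real.log r / T) * t) := by ring

end BanachAlgebra

namespace Matrix

variable {n : Type*} [Fintype n]

theorem _root_.HasDerivAt.matrix_mulVec {m : Type*} [Fintype m] {𝕜 : Type*}
    [NontriviallyNormedField 𝕜] {A : 𝕜 → Matrix m n 𝕜} {x : 𝕜 → n → 𝕜} {A' : Matrix m n 𝕜}
    {x' : n → 𝕜} {t : 𝕜} (hA : HasDerivAt A A' t) (hx : HasDerivAt x x' t) :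
    HasDerivAt (fun s => A s *ᵥ x s) (A t *ᵥ x' + A' *ᵥ x t) t := by
  open scoped Matrix.Norms.Operator in
  let B : Matrix m n 𝕜 →L[𝕜] (n → 𝕜) →L[𝕜] (m → 𝕜) :=
    LinearMap.mkContinuous₂ (LinearMap.mk₂ 𝕜 (· *ᵥ ·) add_mulVec smul_mulVec mulVec_add
      fun c A v => mulVec_smul A c v) 1 fun A v => by simpa using linfty_opNorm_mulVec A v
  exact B.hasDerivAt_of_bilinear (fun _ => hA) (fun _ => hx)

theorem integral_mulVec {m : Type*} [Fintype m] {X : Type*} [MeasurableSpace X] {μ : Measure X}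
    (A : Matrix m n ℝ) {f : X → n → ℝ} (hf : Integrable f μ) :
    ∫ x, A *ᵥ f x ∂μ = A *ᵥ ∫ x, f x ∂μ :=
  (LinearMap.toContinuousLinearMap (mulVecLin A)).integral_comp_comm hf

variable [DecidableEq n]

theorem exp_mulVec_of_mulVec_eq_smul {𝕂 : Type*} [RCLike 𝕂] {M : Matrix n n 𝕂} {μ : 𝕂}
    {u : n → 𝕂} (h : M *ᵥ u = μ • u) : exp M *ᵥ u = exp μ • u := by
  have hpow : ∀ k : ℕ, M ^ k *ᵥ u = μ ^ k • u := by
    intro k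
    induction k with
    | zero => simp
    | succ k ih => rw [pow_succ', ← mulVec_mulVec, ih, mulVec_smul, h, smul_smul, pow_succ]
  open scoped Matrix.Norms.Operator in
  have hM := (exp_series_hasSum_exp' (𝕂 := 𝕂) M).map (mulVec.addMonoidHomLeft u)
    (continuous_id.matrix_mulVec continuous_const)
  have hμ := (exp_series_hasSum_exp' (𝕂 := 𝕂) μ).smul_const u
  simp only [Function.comp_def, mulVec.addMonoidHomLeft, AddMonoidHom.coe_mk, ZeroHom.coe_mk,
    smul_mulVec, hpow, smul_smul, smul_eq_mul] at hM hμ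
  exact hM.unique hμ

/-- An eigenvalue `ν` of `exp M` has an eigenspace preserved by `M`, and an eigenvector `u` of `M`
in it, `M u = μ u`, gives `ν u = exp M u = exp μ u`. -/
theorem spectrum_exp_subset (M : Matrix n n ℂ) :
    spectrum ℂ (exp M) ⊆ Complex.exp '' spectrum ℂ M := by
  intro ν hν
  rw [← AlgEquiv.spectrum_eq toLinAlgEquiv', ← Module.End.hasEigenvalue_iff_mem_spectrum] at hν
  rw [← AlgEquiv.spectrum_eq toLinAlgEquiv']
  have hcomm : Commute (toLinAlgEquiv' (exp M)) (toLinAlgEquiv' M) :=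
    ((Commute.refl M).exp_left).map toLinAlgEquiv'
  have hmaps := Module.End.mapsTo_genEigenspace_of_comm hcomm ν 1
  have : Nontrivial (Module.End.genEigenspace (toLinAlgEquiv' (exp M)) ν 1) :=
    Submodule.nontrivial_iff_ne_bot.mpr hν
  obtain ⟨μ, hμ⟩ := Module.End.exists_eigenvalue ((toLinAlgEquiv' M).restrict hmaps)
  obtain ⟨⟨u, hu_exp⟩, hu⟩ := hμ.exists_hasEigenvector
  have hMu : M *ᵥ u = μ • u := congrArg Subtype.val hu.apply_eq_smul
  have hu0 : u ≠ 0 := by simpa using hu.2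
  refine ⟨μ, ?_, ?_⟩
  · rw [← Module.End.hasEigenvalue_iff_mem_spectrum]
    exact Module.End.hasEigenvalue_of_hasEigenvector ⟨by simpa using hMu, hu0⟩
  · have hν_u : exp M *ᵥ u = ν • u := Module.End.mem_genEigenspace_one.mp hu_exp
    rw [exp_mulVec_of_mulVec_eq_smul hMu, ← Complex.exp_eq_exp_ℂ] at hν_u
    exact smul_left_injective ℂ hu0 hν_u

theorem spectralRadius_exp_lt_one {M : Matrix n n ℂ} (hM : ∀ μ ∈ spectrum ℂ M, μ.re < 0) :
    spectralRadius ℂ (exp M) < 1 := by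
  rcases (spectrum ℂ (exp M)).eq_empty_or_nonempty with h | h
  · simp [spectralRadius, h]
  open scoped Matrix.Norms.Operator in
  refine spectrum.spectralRadius_lt_of_forall_lt_of_nonempty h fun ν hν => ?_
  obtain ⟨μ, hμ, rfl⟩ := spectrum_exp_subset M hν
  rw [← NNReal.coe_lt_coe, coe_nnnorm, Complex.norm_exp]
  simpa using hM μ hμ

theorem exp_map_ofReal (A : Matrix n n ℝ) :
    exp (A.map (algebraMap ℝ ℂ)) = (exp A).map (algebraMap ℝ ℂ) := by
  open scoped Matrix.Norms.Operator in
  exact (map_exp (algebraMap ℝ ℂ).mapMatrix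
    (continuous_id.matrix_map Complex.continuous_ofReal) A).symm

open scoped Matrix.Norms.Operator in
theorem norm_map_ofReal (A : Matrix n n ℝ) : ‖A.map (algebraMap ℝ ℂ)‖ = ‖A‖ := by
  rw [linfty_opNorm_def, linfty_opNorm_def]
  simp

theorem exp_add_smul (A : Matrix n n ℝ) (s t : ℝ) :
    exp ((s + t) • A) = exp (s • A) * exp (t • A) := by
  rw [add_smul, Matrix.exp_add_of_commute _ _ (((Commute.refl A).smul_left s).smul_right t)]

theorem exp_smul_mul_exp_neg_smul (A : Matrix n n ℝ) (t : ℝ) :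
    exp (t • A) * exp ((-t) • A) = 1 := by
  rw [← exp_add_smul, add_neg_cancel, zero_smul, NormedSpace.exp_zero]

theorem continuous_exp_neg_smul_mulVec (F : Matrix n n ℝ) {g : ℝ → n → ℝ} (hg : Continuous g) :
    Continuous fun s : ℝ => exp ((-s) • F) *ᵥ g s := by
  open scoped Matrix.Norms.Operator in
  exact (NormedSpace.exp_continuous.comp (continuous_neg.smul continuous_const)).matrix_mulVec hg

theorem hasDerivAt_exp_smul_const (A : Matrix n n ℝ) (t : ℝ) :
    HasDerivAt (fun s : ℝ => exp (s • A)) (exp (t • A) * A) t := by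
  open scoped Matrix.Norms.Operator in
  exact _root_.hasDerivAt_exp_smul_const A t

theorem eq_exp_smul_mulVec_of_hasDerivAt {F : Matrix n n ℝ} {X g : ℝ → n → ℝ}
    (hg : Continuous g) (hX : ∀ t, HasDerivAt X (F *ᵥ X t + g t) t) (t : ℝ) :
    X t = exp (t • F) *ᵥ (X 0 + ∫ s in 0..t, exp ((-s) • F) *ᵥ g s) := by
  have hderiv : ∀ s, HasDerivAt (fun s => exp ((-s) • F) *ᵥ X s) (exp ((-s) • F) *ᵥ g s) s := by
    intro s
    have h := (hasDerivAt_exp_smul_const (-F) s).matrix_mulVec (hX s)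
    simp only [smul_neg, ← neg_smul] at h
    convert h using 1
    rw [mulVec_add, mul_neg, neg_mulVec, ← mulVec_mulVec]
    abel
  rw [intervalIntegral.integral_eq_sub_of_hasDerivAt (fun s _ => hderiv s)
    ((continuous_exp_neg_smul_mulVec F hg).intervalIntegrable 0 t), neg_zero, zero_smul,
    NormedSpace.exp_zero, one_mulVec, add_sub_cancel, mulVec_mulVec, exp_smul_mul_exp_neg_smul,
    one_mulVec]

theorem setIntegral_Iic_exp_neg_smul_mulVec_comp_add_right (F : Matrix n n ℝ) {g : ℝ → n → ℝ}
    {t : ℝ} (h0 : IntegrableOn (fun s : ℝ => exp ((-s) • F) *ᵥ g s) (Iic 0))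
    (ht : IntegrableOn (fun s : ℝ => exp ((-s) • F) *ᵥ g s) (Iic t)) :
    ∫ s in Iic 0, exp ((-s) • F) *ᵥ g (s + t) = exp (t • F) *ᵥ
      ((∫ s in Iic 0, exp ((-s) • F) *ᵥ g s) + ∫ s in 0..t, exp ((-s) • F) *ᵥ g s) := by
  have hshift := (measurePreserving_add_right volume t).setIntegral_preimage_emb
    (measurableEmbedding_addRight t) (fun r => exp ((t - r) • F) *ᵥ g r) (Iic t)
  rw [preimage_add_const_Iic, sub_self] at hshift
  rw [← intervalIntegral.integral_Iic_sub_Iic h0 ht, add_sub_cancel, ← integral_mulVec _ ht]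
  simp only [mulVec_mulVec, ← exp_add_smul, ← sub_eq_add_neg, ← hshift, sub_add_cancel_right]

end Matrix

namespace IsHurwitz

variable {m : ℕ} {F : Matrix (Fin m) (Fin m) ℝ}

theorem exists_norm_exp_smul_mulVec_le (hF : IsHurwitz F) :
    ∃ C lam : ℝ, 0 ≤ C ∧ 0 < lam ∧ ∀ t, 0 ≤ t → ∀ v : Fin m → ℝ,
      ‖exp (t • F) *ᵥ v‖ ≤ C * Real.exp (-lam * t) * ‖v‖ := by
  have hρ := Matrix.spectralRadius_exp_lt_one hF
  open scoped Matrix.Norms.Operator in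
  obtain ⟨k, hk, hk1⟩ := exists_norm_pow_lt_one_of_spectralRadius_lt_one hρ
  have hT : ‖exp ((k : ℝ) • F)‖ < 1 := by
    rw [← Matrix.norm_map_ofReal]
    convert hk1 using 2
    rw [← Matrix.exp_map_ofReal, ← Matrix.exp_nsmul]
    congr 1
    ext
    simp
  obtain ⟨C, lam, hC, hlam, hdecay⟩ :=
    exists_norm_exp_smul_le_of_norm_exp_smul_lt_one (by positivity) hT
  exact ⟨C, lam, hC, hlam, fun t ht v =>
    (linfty_opNorm_mulVec _ v).trans (mul_le_mul_of_nonneg_right (hdecay t ht) (norm_nonneg v))⟩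

theorem exists_norm_exp_neg_smul_mulVec_le (hF : IsHurwitz F) :
    ∃ C lam : ℝ, 0 < lam ∧ ∀ {s B : ℝ} {v : Fin m → ℝ}, s ≤ 0 → ‖v‖ ≤ B →
      ‖exp ((-s) • F) *ᵥ v‖ ≤ C * B * Real.exp (lam * s) := by
  obtain ⟨C, lam, hC, hlam, hdecay⟩ := hF.exists_norm_exp_smul_mulVec_le
  refine ⟨C, lam, hlam, fun {s B v} hs hv => ?_⟩
  calc ‖exp ((-s) • F) *ᵥ v‖ ≤ C * Real.exp (-lam * -s) * ‖v‖ :=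
        hdecay (-s) (neg_nonneg.mpr hs) v
    _ ≤ C * Real.exp (-lam * -s) * B := by gcongr
    _ = C * B * Real.exp (lam * s) := by rw [neg_mul_neg]; ring

theorem integrableOn_Iic_exp_neg_smul_mulVec (hF : IsHurwitz F) {g : ℝ → Fin m → ℝ} {B : ℝ}
    (hg : Continuous g) (hB : ∀ s, ‖g s‖ ≤ B) (a : ℝ) :
    IntegrableOn (fun s : ℝ => exp ((-s) • F) *ᵥ g s) (Iic a) := by
  obtain ⟨C, lam, hlam, hdecay⟩ := hF.exists_norm_exp_neg_smul_mulVec_le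
  have hcont := Matrix.continuous_exp_neg_smul_mulVec F hg
  have h0 : IntegrableOn (fun s : ℝ => exp ((-s) • F) *ᵥ g s) (Iic 0) := by
    refine ((integrableOn_exp_mul_Iic hlam 0).const_mul (C * B)).mono'
      hcont.aestronglyMeasurable ?_
    filter_upwards [ae_restrict_mem measurableSet_Iic] with s hs
    exact hdecay hs (hB s)
  exact (h0.union hcont.integrableOn_Icc).mono_set fun s hs =>
    (le_or_gt s 0).imp id fun h => ⟨h.le, hs⟩

theorem exists_norm_setIntegral_Iic_exp_neg_smul_mulVec_le (hF : IsHurwitz F) :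
    ∃ K : ℝ, ∀ (g : ℝ → Fin m → ℝ) (B : ℝ), (∀ s, ‖g s‖ ≤ B) →
      ‖∫ s in Iic 0, exp ((-s) • F) *ᵥ g s‖ ≤ K * B := by
  obtain ⟨C, lam, hlam, hdecay⟩ := hF.exists_norm_exp_neg_smul_mulVec_le
  refine ⟨C / lam, fun g B hB => ?_⟩
  calc ‖∫ s in Iic 0, exp ((-s) • F) *ᵥ g s‖ ≤ ∫ s in Iic 0, C * B * Real.exp (lam * s) := by
        refine norm_integral_le_of_norm_le ((integrableOn_exp_mul_Iic hlam 0).const_mul _) ?_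
        filter_upwards [ae_restrict_mem measurableSet_Iic] with s hs
        exact hdecay hs (hB s)
    _ = C / lam * B := by
        rw [integral_const_mul, integral_exp_mul_Iic hlam, mul_zero, Real.exp_zero]
        ring

theorem eq_zero_of_norm_exp_smul_mulVec_le (hF : IsHurwitz F) {v : Fin m → ℝ} {B : ℝ}
    (hB : ∀ t ≤ (0 : ℝ), ‖exp (t • F) *ᵥ v‖ ≤ B) : v = 0 := by
  obtain ⟨C, lam, hlam, hdecay⟩ := hF.exists_norm_exp_neg_smul_mulVec_le
  have hle : ∀ t ≤ (0 : ℝ), ‖v‖ ≤ C * B * Real.exp (lam * t) := fun t ht => by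
    calc ‖v‖ = ‖exp ((-t) • F) *ᵥ (exp (t • F) *ᵥ v)‖ := by
          rw [mulVec_mulVec, ← Matrix.exp_add_smul, neg_add_cancel, zero_smul,
            NormedSpace.exp_zero, one_mulVec]
      _ ≤ C * B * Real.exp (lam * t) := hdecay ht (hB t ht)
  have hlim : Tendsto (fun t => C * B * Real.exp (lam * t)) atBot (𝓝 0) := by
    simpa using (Real.tendsto_exp_atBot.comp
      (tendsto_id.const_mul_atBot hlam)).const_mul (C * B)
  exact norm_le_zero_iff.mp (ge_of_tendsto hlim (eventually_atBot.mpr ⟨0, hle⟩))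

end IsHurwitz

theorem solution_formula_and_backward_boundedness_general (N m q : ℕ)
    (f : (Fin N → ℝ) → (Fin N → ℝ))
    (φ : ℝ → (Fin N → ℝ) → (Fin N → ℝ))
    (hφadd : ∀ s t z, φ (s + t) z = φ s (φ t z))
    (hφode : ∀ z t, HasDerivAt (fun τ => φ τ z) (f (φ t z)) t)
    (A₀ : Set (Fin N → ℝ)) (hA₀c : IsCompact A₀)
    (hA₀inv : ∀ t, ∀ z ∈ A₀, φ t z ∈ A₀)
    (F : Matrix (Fin m) (Fin m) ℝ) (hF : IsHurwitz F)
    (G : Matrix (Fin m) (Fin q) ℝ)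
    (w : (Fin N → ℝ) → (Fin q → ℝ)) (hw : ContinuousOn w A₀)
    (σ : (Fin N → ℝ) → (Fin m → ℝ))
    (hσ : ∀ z ∈ A₀, σ z =
      ∫ s in Set.Iic (0 : ℝ), (NormedSpace.exp ((-s) • F)).mulVec (G.mulVec (w (φ s z))))
    (z₀ : Fin N → ℝ) (hz₀ : z₀ ∈ A₀)
    (X₀ : Fin m → ℝ) (X : ℝ → (Fin m → ℝ)) (hX0 : X 0 = X₀)
    (hXode : ∀ t, HasDerivAt X (F.mulVec (X t) + G.mulVec (w (φ t z₀))) t) :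
    (∀ t : ℝ, X t = (NormedSpace.exp (t • F)).mulVec (X₀ - σ z₀) + σ (φ t z₀)) ∧
    ((∃ Cb : ℝ, ∀ t ≤ (0:ℝ), ‖X t‖ ≤ Cb) ↔ X₀ = σ z₀) := by
  set g : (Fin N → ℝ) → ℝ → Fin m → ℝ := fun z s => G *ᵥ w (φ s z)
  have hg : ∀ z ∈ A₀, Continuous (g z) := fun z hz =>
    continuous_const.matrix_mulVec (hw.comp_continuous
      (continuous_iff_continuousAt.mpr fun s => (hφode z s).continuousAt) (hA₀inv · z hz))
  obtain ⟨B, hB⟩ := hA₀c.exists_bound_of_continuousOn (f := fun z => G *ᵥ w z)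
    ((continuous_const.matrix_mulVec continuous_id).comp_continuousOn hw)
  have hgB : ∀ z ∈ A₀, ∀ s, ‖g z s‖ ≤ B := fun z hz s => hB _ (hA₀inv s z hz)
  obtain ⟨K, hK⟩ := hF.exists_norm_setIntegral_Iic_exp_neg_smul_mulVec_le
  have hσB : ∀ z ∈ A₀, ‖σ z‖ ≤ K * B := fun z hz => hσ z hz ▸ hK (g z) B (hgB z hz)
  have hint := hF.integrableOn_Iic_exp_neg_smul_mulVec (hg z₀ hz₀) (hgB z₀ hz₀)
  have hσ_flow : ∀ t, σ (φ t z₀) =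
      exp (t • F) *ᵥ (σ z₀ + ∫ s in 0..t, exp ((-s) • F) *ᵥ g z₀ s) := fun t => by
    rw [hσ _ (hA₀inv t z₀ hz₀), hσ z₀ hz₀]
    simp_rw [← hφadd]
    exact setIntegral_Iic_exp_neg_smul_mulVec_comp_add_right F (hint 0) (hint t)
  have hformula : ∀ t, X t = exp (t • F) *ᵥ (X₀ - σ z₀) + σ (φ t z₀) := fun t => by
    rw [eq_exp_smul_mulVec_of_hasDerivAt (hg z₀ hz₀) hXode t, hσ_flow, hX0, ← mulVec_add]
    congr 1
    abel
  refine ⟨hformula, fun ⟨Cb, hCb⟩ => ?_, fun h => ⟨K * B, fun t _ => ?_⟩⟩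
  · refine sub_eq_zero.mp (hF.eq_zero_of_norm_exp_smul_mulVec_le (B := Cb + K * B) fun t ht => ?_)
    rw [eq_sub_of_add_eq (hformula t).symm]
    exact (norm_sub_le _ _).trans (add_le_add (hCb t ht) (hσB _ (hA₀inv t z₀ hz₀)))
  · rw [hformula t, h, sub_self, mulVec_zero, zero_add]
    exact hσB _ (hA₀inv t z₀ hz₀)

/-- every solution of `Ẋ = F X + G Ω(τ₁(φ(t,z₀)))` satisfies
`X(t) = e^{Ft}[X₀ - σ(z₀)] + σ(φ(t,z₀))`; it is bounded for `t ≤ 0` iff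
`X₀ = σ(z₀)`. -/
theorem solution_formula_and_backward_boundedness (N m q : ℕ)
    (f : (Fin N → ℝ) → (Fin N → ℝ)) (hf : LocallyLipschitz f)
    (φ : ℝ → (Fin N → ℝ) → (Fin N → ℝ))
    (hφ0 : ∀ z, φ 0 z = z)
    (hφadd : ∀ s t z, φ (s + t) z = φ s (φ t z))
    (hφode : ∀ z t, HasDerivAt (fun τ => φ τ z) (f (φ t z)) t)
    (A₀ : Set (Fin N → ℝ)) (hA₀c : IsCompact A₀)
    (hA₀inv : ∀ t, ∀ z ∈ A₀, φ t z ∈ A₀)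
    (F : Matrix (Fin m) (Fin m) ℝ) (hF : IsHurwitz F)
    (G : Matrix (Fin m) (Fin q) ℝ)
    (w : (Fin N → ℝ) → (Fin q → ℝ)) (hw : ContinuousOn w A₀)
    (σ : (Fin N → ℝ) → (Fin m → ℝ))
    (hσ : ∀ z ∈ A₀, σ z =
      ∫ s in Set.Iic (0 : ℝ), (NormedSpace.exp ((-s) • F)).mulVec (G.mulVec (w (φ s z))))
    (z₀ : Fin N → ℝ) (hz₀ : z₀ ∈ A₀)
    (X₀ : Fin m → ℝ) (X : ℝ → (Fin m → ℝ)) (hX0 : X 0 = X₀)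
    (hXode : ∀ t, HasDerivAt X (F.mulVec (X t) + G.mulVec (w (φ t z₀))) t) :
    (∀ t : ℝ, X t = (NormedSpace.exp (t • F)).mulVec (X₀ - σ z₀) + σ (φ t z₀)) ∧
    ((∃ Cb : ℝ, ∀ t ≤ (0:ℝ), ‖X t‖ ≤ Cb) ↔ X₀ = σ z₀) :=
  solution_formula_and_backward_boundedness_general N m q f φ hφadd hφode A₀ hA₀c hA₀inv F hF G w hw
    σ hσ z₀ hz₀ X₀ X hX0 hXode
end
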